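/- Let Ω ⊆ ℂ be open and let τ, ρ : Ω → ℝ be smooth with ρ > 0, satisfying the Ribaucour equation ρ² + e^{−2τ} ρ Δ₀ρ = 1 + e^{−2τ}(ρ_x² + ρ_y²) on Ω. Set ρ* := 1/ρ and τ* := τ − log ρ. Then on Ω one has e^{−2τ}Δ₀ρ + 2ρ = e^{−2τ*}Δ₀ρ* + 2ρ*, i.e. Δρ + 2ρ = Δ*ρ* + 2ρ* where Δ and Δ* are the Laplacians of the conformal metrics e^{2τ}(dx²+dy²) and e^{2τ*}(dx²+dy²). (Since −2H/K = Δρ + 2ρ, this says that the ratio H/K of mean to Gaussian curvature is the same for a Ribaucour surface and its dual.) -/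

import Mathlib

/-- Partial derivative in the `x`-direction of a function on `ℂ ≅ ℝ²`. -/
noncomputable def pdx (u : ℂ → ℝ) (z : ℂ) : ℝ := fderiv ℝ u z 1

/-- Partial derivative in the `y`-direction of a function on `ℂ ≅ ℝ²`. -/
noncomputable def pdy (u : ℂ → ℝ) (z : ℂ) : ℝ := fderiv ℝ u z Complex.I

/-- Flat Laplacian `Δ₀u = u_xx + u_yy`. -/
noncomputable def lap (u : ℂ → ℝ) (z : ℂ) : ℝ := pdx (pdx u) z + pdy (pdy u) z

/-!
Since `ρ* = 1/ρ`, the flat Laplacian transforms as `Δ₀ρ* = 2|∇ρ|²/ρ³ - Δ₀ρ/ρ²`, while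
`e^{-2τ*} = ρ² e^{-2τ}`. Substituting, the difference of the two sides becomes
`(2/ρ)(ρ² + e^{-2τ}ρΔ₀ρ - 1 - e^{-2τ}|∇ρ|²)`, which vanishes by the Ribaucour equation.
-/

open Filter Topology

section Reciprocal

variable {𝕜 E : Type*} [NontriviallyNormedField 𝕜] [NormedAddCommGroup E] [NormedSpace 𝕜 E]
  {f : E → 𝕜} {z : E}

lemma fderiv_inv_apply (hf : DifferentiableAt 𝕜 f z) (hz : f z ≠ 0) (e : E) :
    fderiv 𝕜 (fun w => (f w)⁻¹) z e = -fderiv 𝕜 f z e / f z ^ 2 := by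
  have h := (hasDerivAt_inv hz).comp_hasFDerivAt z hf.hasFDerivAt
  rw [show (fun w => (f w)⁻¹) = (fun y => y⁻¹) ∘ f from rfl, h.fderiv]
  simp [div_eq_inv_mul]

lemma fderiv_fderiv_inv_apply (hf : ContDiffAt 𝕜 2 f z) (hz : f z ≠ 0) (e : E) :
    fderiv 𝕜 (fun w => fderiv 𝕜 (fun w => (f w)⁻¹) w e) z e
      = 2 * fderiv 𝕜 f z e ^ 2 / f z ^ 3 - fderiv 𝕜 (fun w => fderiv 𝕜 f w e) z e / f z ^ 2 := by
  have hdf : ∀ᶠ w in 𝓝 z, DifferentiableAt 𝕜 f w ∧ f w ≠ 0 :=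
    (hf.eventually (by simp)).and (hf.continuousAt.eventually_ne hz) |>.mono
      fun w hw => ⟨hw.1.differentiableAt two_ne_zero, hw.2⟩
  have hfirst : (fun w => fderiv 𝕜 (fun w => (f w)⁻¹) w e)
      =ᶠ[𝓝 z] fun w => -fderiv 𝕜 f w e * (f w ^ 2)⁻¹ :=
    hdf.mono fun w hw => (fderiv_inv_apply hw.1 hw.2 e).trans (div_eq_mul_inv _ _)
  have hDf : DifferentiableAt 𝕜 (fun w => fderiv 𝕜 f w e) z :=
    ((hf.fderiv_right (m := 1) le_rfl).differentiableAt one_ne_zero).clm_apply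
      (differentiableAt_const e)
  have hf1 : DifferentiableAt 𝕜 f z := hf.differentiableAt two_ne_zero
  have hf2 : DifferentiableAt 𝕜 (fun w => f w ^ 2) z := hf1.pow 2
  have hDf_neg : DifferentiableAt 𝕜 (fun w => -fderiv 𝕜 f w e) z := hDf.neg
  have hf2_inv : DifferentiableAt 𝕜 (fun w => (f w ^ 2)⁻¹) z := hf2.inv (pow_ne_zero 2 hz)
  rw [hfirst.fderiv_eq, fderiv_fun_mul hDf_neg hf2_inv, add_apply, smul_apply, smul_apply,
    fderiv_inv_apply hf2 (pow_ne_zero 2 hz), fderiv_fun_neg, fderiv_fun_pow 2 hf1]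
  simp only [neg_apply, smul_apply, smul_eq_mul]
  field_simp
  ring

end Reciprocal

lemma Filter.EventuallyEq.lap_eq {u v : ℂ → ℝ} {z : ℂ} (h : u =ᶠ[𝓝 z] v) : lap u z = lap v z := by
  have hD : fderiv ℝ u =ᶠ[𝓝 z] fderiv ℝ v := h.fderiv
  have hx : pdx u =ᶠ[𝓝 z] pdx v := hD.mono fun w hw => by simp only [pdx, hw]
  have hy : pdy u =ᶠ[𝓝 z] pdy v := hD.mono fun w hw => by simp only [pdy, hw]
  simp only [lap, pdx, pdy, hx.fderiv_eq, hy.fderiv_eq]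

lemma lap_inv {ρ : ℂ → ℝ} {z : ℂ} (hρ : ContDiffAt ℝ 2 ρ z) (hz : ρ z ≠ 0) :
    lap (fun w => (ρ w)⁻¹) z = 2 * (pdx ρ z ^ 2 + pdy ρ z ^ 2) / ρ z ^ 3 - lap ρ z / ρ z ^ 2 := by
  unfold lap pdx pdy
  rw [fderiv_fderiv_inv_apply hρ hz, fderiv_fderiv_inv_apply hρ hz]
  ring

lemma exp_neg_two_mul_sub_log {t r : ℝ} (hr : 0 < r) :
    Real.exp (-(2 * (t - Real.log r))) = Real.exp (-(2 * t)) * r ^ 2 := by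
  rw [show -(2 * (t - Real.log r)) = -(2 * t) + 2 * Real.log r by ring, Real.exp_add,
    show 2 * Real.log r = Real.log (r ^ 2) by simp [Real.log_pow], Real.exp_log (by positivity)]

theorem dual_ribaucour_preserves_mean_to_gauss_ratio_general
    (Ω : Set ℂ) (hΩ : IsOpen Ω) (τ ρ : ℂ → ℝ)
    (hρ : ContDiffOn ℝ (⊤ : ℕ∞) ρ Ω)
    (hρpos : ∀ z ∈ Ω, 0 < ρ z)
    (hRibaucour : ∀ z ∈ Ω, ρ z ^ 2 + Real.exp (-(2 * τ z)) * ρ z * lap ρ z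
      = 1 + Real.exp (-(2 * τ z)) * (pdx ρ z ^ 2 + pdy ρ z ^ 2))
    (ρs τs : ℂ → ℝ)
    (hρs : ∀ z ∈ Ω, ρs z = 1 / ρ z)
    (hτs : ∀ z ∈ Ω, τs z = τ z - Real.log (ρ z)) :
    ∀ z ∈ Ω, Real.exp (-(2 * τ z)) * lap ρ z + 2 * ρ z
      = Real.exp (-(2 * τs z)) * lap ρs z + 2 * ρs z := by
  intro z hz
  have hρz : 0 < ρ z := hρpos z hz
  have hρs_inv : ρs =ᶠ[𝓝 z] fun w => (ρ w)⁻¹ :=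
    eventually_of_mem (hΩ.mem_nhds hz) fun w hw => by rw [hρs w hw, one_div]
  have hρ2 : ContDiffAt ℝ 2 ρ z := (hρ.contDiffAt (hΩ.mem_nhds hz)).of_le (by norm_cast)
  rw [hτs z hz, exp_neg_two_mul_sub_log hρz, hρs_inv.lap_eq, lap_inv hρ2 hρz.ne', hρs z hz]
  field_simp
  linear_combination 2 * hRibaucour z hz

/-- if `ρ > 0` satisfies the Ribaucour equation relative to `τ` on the open
set `Ω`, then with the dual data `ρ* = 1/ρ`, `τ* = τ - log ρ` one has
`e^{-2τ}Δ₀ρ + 2ρ = e^{-2τ*}Δ₀ρ* + 2ρ*` on `Ω`, i.e. `Δρ + 2ρ = Δ*ρ* + 2ρ*`: the ratio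
`H/K` is the same for a Ribaucour surface and its dual. -/
theorem dual_ribaucour_preserves_mean_to_gauss_ratio
    (Ω : Set ℂ) (hΩ : IsOpen Ω) (τ ρ : ℂ → ℝ)
    (hτ : ContDiffOn ℝ (⊤ : ℕ∞) τ Ω) (hρ : ContDiffOn ℝ (⊤ : ℕ∞) ρ Ω)
    (hρpos : ∀ z ∈ Ω, 0 < ρ z)
    (hRibaucour : ∀ z ∈ Ω, ρ z ^ 2 + Real.exp (-(2 * τ z)) * ρ z * lap ρ z
      = 1 + Real.exp (-(2 * τ z)) * (pdx ρ z ^ 2 + pdy ρ z ^ 2))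
    (ρs τs : ℂ → ℝ)
    (hρs : ∀ z ∈ Ω, ρs z = 1 / ρ z)
    (hτs : ∀ z ∈ Ω, τs z = τ z - Real.log (ρ z)) :
    ∀ z ∈ Ω, Real.exp (-(2 * τ z)) * lap ρ z + 2 * ρ z
      = Real.exp (-(2 * τs z)) * lap ρs z + 2 * ρs z :=
  dual_ribaucour_preserves_mean_to_gauss_ratio_general Ω hΩ τ ρ hρ hρpos hRibaucour ρs τs hρs hτs
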